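/- arXiv:1807.08404 — 2 statements merged into one kernel-verified Lean document; each statement's English description precedes it below -/
import Mathlib

section
/- Let u be twice continuously differentiable on (0,∞) with u' > 0 and u'' < 0, and γ(x) = -x u''(x)/u'(x). If lim_{x→∞} γ(x) = ∞, then for any κ ∈ (0,1), liminf_{x→∞} (u')^{-1}(κ u'(x)) / x = 1; in particular the bounded relative risk aversion conclusion fails. -/
open Filter Topology

/-!
If the elasticity `-t g'(t)/g(t)` of a positive function `g` is at least `M` on `[x, ∞)`, then
`log g + M log` is antitone there, so `g (c x) ≤ c ^ (-M) g x` for `c > 1`. For `g = u'` and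
`M log c > -log κ` this gives `u'(c x) < κ u'(x) = u'(y x)`, hence `y x < c x`, for all large `x`,
while `x < y x` because `u'` is strictly decreasing. So `y x / x → 1`.
-/

theorem antitoneOn_log_add_mul_log {g : ℝ → ℝ} {M a : ℝ} (ha : 0 < a)
    (hg : ∀ t, a ≤ t → DifferentiableAt ℝ g t) (hpos : ∀ t, a ≤ t → 0 < g t)
    (hM : ∀ t, a ≤ t → M ≤ -t * deriv g t / g t) :
    AntitoneOn (fun t => Real.log (g t) + M * Real.log t) (Set.Ici a) := by
  have hderiv : ∀ t, a ≤ t → HasDerivAt (fun t => Real.log (g t) + M * Real.log t)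
      (deriv g t / g t + M * t⁻¹) t := fun t ht =>
    ((hg t ht).hasDerivAt.log (hpos t ht).ne').add
      ((Real.hasDerivAt_log (by linarith)).const_mul M)
  refine antitoneOn_of_hasDerivWithinAt_nonpos (convex_Ici a)
    (fun t ht => (hderiv t ht).continuousAt.continuousWithinAt)
    (fun t ht => (hderiv t (interior_subset ht)).hasDerivWithinAt) (fun t ht => ?_)
  have hat : a ≤ t := interior_subset ht
  have ht0 : 0 < t := ha.trans_le hat
  have hgt := hpos t hat
  have hMg : M * g t ≤ -t * deriv g t := (le_div_iff₀ hgt).mp (hM t hat)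
  calc deriv g t / g t + M * t⁻¹ = (deriv g t * t + M * g t) / (g t * t) := by field_simp
    _ ≤ 0 := div_nonpos_of_nonpos_of_nonneg (by linarith) (by positivity)

section Elasticity

variable {g : ℝ → ℝ} {κ : ℝ}

theorem eventually_lt_const_mul_of_tendsto_elasticity
    (hg : DifferentiableOn ℝ g (Set.Ioi 0)) (hpos : ∀ t, 0 < t → 0 < g t)
    (hγ : Tendsto (fun x => -x * deriv g x / g x) atTop atTop) (hκ : 0 < κ) {c : ℝ} (hc : 1 < c) :
    ∀ᶠ x in atTop, g (c * x) < κ * g x := by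
  have hlogc : 0 < Real.log c := Real.log_pos hc
  set M := (1 - Real.log κ) / Real.log c
  have hMlogc : M * Real.log c = 1 - Real.log κ := div_mul_cancel₀ _ hlogc.ne'
  obtain ⟨x₀, hx₀⟩ := (hγ.eventually_ge_atTop M).exists_forall_of_atTop
  filter_upwards [eventually_ge_atTop x₀, eventually_gt_atTop 0] with x hxx₀ hx
  have hxcx : x ≤ c * x := le_mul_of_one_le_left hx.le hc.le
  have hdecay := antitoneOn_log_add_mul_log hx
    (fun t ht => hg.differentiableAt (Ioi_mem_nhds (hx.trans_le ht)))
    (fun t ht => hpos t (hx.trans_le ht)) (fun t ht => hx₀ t (hxx₀.trans ht))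
    Set.self_mem_Ici (Set.mem_Ici.mpr hxcx) hxcx
  simp only [Real.log_mul (by linarith : c ≠ 0) hx.ne', mul_add] at hdecay
  rw [← Real.log_lt_log_iff (hpos _ (by positivity)) (mul_pos hκ (hpos x hx)),
    Real.log_mul hκ.ne' (hpos x hx).ne']
  linarith

theorem tendsto_div_of_tendsto_elasticity (hg : DifferentiableOn ℝ g (Set.Ioi 0))
    (hpos : ∀ t, 0 < t → 0 < g t) (hg' : ∀ t, 0 < t → deriv g t < 0)
    (hγ : Tendsto (fun x => -x * deriv g x / g x) atTop atTop) (hκ0 : 0 < κ) (hκ1 : κ < 1)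
    {y : ℝ → ℝ} (hy : ∀ x, 0 < x → 0 < y x ∧ g (y x) = κ * g x) :
    Tendsto (fun x => y x / x) atTop (𝓝 1) := by
  have hanti : StrictAntiOn g (Set.Ioi 0) :=
    strictAntiOn_of_deriv_neg (convex_Ioi 0) hg.continuousOn
      (fun t ht => hg' t (by rwa [interior_Ioi] at ht))
  refine tendsto_order.2 ⟨fun a ha => ?_, fun b hb => ?_⟩
  · filter_upwards [eventually_gt_atTop 0] with x hx
    have hgy : g (y x) < g x := (hy x hx).2 ▸ mul_lt_of_lt_one_left (hpos x hx) hκ1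
    have hxy : x < y x := (hanti.lt_iff_gt (hy x hx).1 hx).mp hgy
    exact ha.trans ((one_lt_div hx).2 hxy)
  · filter_upwards [eventually_lt_const_mul_of_tendsto_elasticity hg hpos hγ hκ0 hb,
      eventually_gt_atTop 0] with x hgbx hx
    rw [← (hy x hx).2] at hgbx
    have hybx : y x < b * x :=
      (hanti.lt_iff_gt (by positivity : 0 < b * x) (hy x hx).1).mp hgbx
    exact (div_lt_iff₀ hx).2 hybx

end Elasticity

/-- If relative risk aversion `γ(x) = -x u''(x)/u'(x)` tends to infinity, then for any
`κ ∈ (0,1)`, `liminf_{x→∞} (u')⁻¹(κ u'(x))/x = 1`, where `y x = (u')⁻¹(κ u'(x))`. -/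
theorem stmt_12 (u : ℝ → ℝ) (hu : ContDiffOn ℝ 2 u (Set.Ioi 0))
    (hu' : ∀ x : ℝ, 0 < x → 0 < deriv u x)
    (hu'' : ∀ x : ℝ, 0 < x → deriv (deriv u) x < 0)
    (hγ : Tendsto (fun x => -x * deriv (deriv u) x / deriv u x) atTop atTop)
    (κ : ℝ) (hκ0 : 0 < κ) (hκ1 : κ < 1)
    (y : ℝ → ℝ) (hy : ∀ x : ℝ, 0 < x → 0 < y x ∧ deriv u (y x) = κ * deriv u x) :
    Filter.liminf (fun x => y x / x) atTop = 1 := by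
  have hdiff : DifferentiableOn ℝ (deriv u) (Set.Ioi 0) :=
    (hu.deriv_of_isOpen (m := 1) isOpen_Ioi (by norm_num)).differentiableOn one_ne_zero
  exact (tendsto_div_of_tendsto_elasticity hdiff hu' hu'' hγ hκ0 hκ1 hy).liminf_eq
end

section
/- Let {M_t}_{t≥0} be a nonnegative supermartingale with M_0 < ∞, and suppose M_t = (βR)^t u'(c_t) with βR > 1, u' > 0, and u'(x) → 0 as x → ∞ with u' strictly decreasing. Then M_t converges almost surely to a finite random variable M, and consequently u'(c_t) = (βR)^{-t} M_t → 0 almost surely, so c_t → ∞ almost surely. -/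
open MeasureTheory Filter

/-!
A nonnegative supermartingale is bounded in `L¹` by `𝔼[M₀]`, so by the martingale convergence
theorem `M_t` converges almost surely to a finite limit. Dividing by the exploding factor
`(βR)^t` forces `u'(c_t) → 0`, and since `u'` is positive and decreasing, `u'(c_t)` can only
become smaller than `u'(b)` once `c_t > b`; hence `c_t → ∞`.
-/

lemma tendsto_zero_of_tendsto_pow_mul {r : ℝ} (hr : 1 < r) {x : ℕ → ℝ} {L : ℝ}
    (h : Tendsto (fun n => r ^ n * x n) atTop (nhds L)) : Tendsto x atTop (nhds 0) := by
  have hr₀ : r ≠ 0 := (zero_lt_one.trans hr).ne'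
  have hdecay : Tendsto (fun n : ℕ => r⁻¹ ^ n) atTop (nhds 0) :=
    tendsto_pow_atTop_nhds_zero_of_lt_one (inv_nonneg.2 (zero_lt_one.trans hr).le)
      (inv_lt_one_of_one_lt₀ hr)
  refine (zero_mul L ▸ hdecay.mul h).congr fun n => ?_
  rw [← mul_assoc, ← mul_pow, inv_mul_cancel₀ hr₀, one_pow, one_mul]

lemma Antitone.tendsto_atTop_of_tendsto_comp {α β γ : Type*} [LinearOrder β] [LinearOrder γ]
    [TopologicalSpace γ] [OrderTopology γ] {g : β → γ} (hg : Antitone g) {a : γ}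
    (hgt : ∀ y, a < g y) {l : Filter α} {x : α → β} (h : Tendsto (fun t => g (x t)) l (nhds a)) :
    Tendsto x l atTop := by
  refine tendsto_atTop.2 fun b => ?_
  filter_upwards [h.eventually (eventually_lt_nhds (hgt b))] with t ht
  by_contra! hlt
  exact (hg hlt.le).not_gt ht

namespace MeasureTheory

variable {Ω : Type*} {m0 : MeasurableSpace Ω} {μ : Measure Ω} {ℱ : Filtration ℕ m0}
  {f : ℕ → Ω → ℝ}

lemma eLpNorm_one_eq_ofReal_integral_of_nonneg {g : Ω → ℝ} (hg : Integrable g μ)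
    (h0 : 0 ≤ᵐ[μ] g) : eLpNorm g 1 μ = ENNReal.ofReal (∫ ω, g ω ∂μ) := by
  rw [eLpNorm_one_eq_lintegral_enorm, ofReal_integral_eq_lintegral_ofReal hg h0]
  refine lintegral_congr_ae ?_
  filter_upwards [h0] with ω hω
  exact Real.enorm_eq_ofReal hω

lemma Supermartingale.integral_le [IsFiniteMeasure μ] (hf : Supermartingale f ℱ μ) {i j : ℕ}
    (hij : i ≤ j) : ∫ ω, f j ω ∂μ ≤ ∫ ω, f i ω ∂μ := by
  simpa using hf.setIntegral_le hij MeasurableSet.univ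

lemma Supermartingale.eLpNorm_one_le_of_nonneg [IsFiniteMeasure μ] (hf : Supermartingale f ℱ μ)
    (hnonneg : ∀ n, 0 ≤ᵐ[μ] f n) (n : ℕ) :
    eLpNorm (f n) 1 μ ≤ (∫ ω, f 0 ω ∂μ).toNNReal := by
  rw [eLpNorm_one_eq_ofReal_integral_of_nonneg (hf.integrable n) (hnonneg n), ENNReal.ofReal]
  exact ENNReal.coe_le_coe.2 (Real.toNNReal_le_toNNReal (hf.integral_le n.zero_le))

theorem Supermartingale.exists_ae_tendsto_of_nonneg [IsFiniteMeasure μ]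
    (hf : Supermartingale f ℱ μ) (hnonneg : ∀ n, 0 ≤ᵐ[μ] f n) :
    ∃ g : Ω → ℝ, ∀ᵐ ω ∂μ, Tendsto (fun n => f n ω) atTop (nhds (g ω)) := by
  have hbdd (n : ℕ) : eLpNorm ((-f) n) 1 μ ≤ (∫ ω, f 0 ω ∂μ).toNNReal := by
    simpa [eLpNorm_neg] using hf.eLpNorm_one_le_of_nonneg hnonneg n
  refine ⟨fun ω => -(ℱ.limitProcess (-f) μ ω), ?_⟩
  filter_upwards [hf.neg.ae_tendsto_limitProcess hbdd] with ω hω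
  simpa using hω.neg

end MeasureTheory

theorem stmt_19_general {Ω : Type*} {m0 : MeasurableSpace Ω} (μ : Measure Ω) [IsProbabilityMeasure μ]
    (ℱ : Filtration ℕ m0) (M : ℕ → Ω → ℝ) (c : ℕ → Ω → ℝ)
    (u' : ℝ → ℝ) (β R : ℝ) (hβR : 1 < β * R)
    (hu'pos : ∀ x : ℝ, 0 < u' x) (hu'anti : StrictAnti u')
    (hsuper : Supermartingale M ℱ μ)
    (hMnonneg : ∀ t ω, 0 ≤ M t ω)
    (hM : ∀ t ω, M t ω = (β * R) ^ t * u' (c t ω)) :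
    ∃ Mlim : Ω → ℝ,
      (∀ᵐ ω ∂μ, Tendsto (fun t => M t ω) atTop (nhds (Mlim ω))) ∧
      (∀ᵐ ω ∂μ, Tendsto (fun t => u' (c t ω)) atTop (nhds 0)) ∧
      (∀ᵐ ω ∂μ, Tendsto (fun t => c t ω) atTop atTop) := by
  obtain ⟨Mlim, hconv⟩ :=
    hsuper.exists_ae_tendsto_of_nonneg fun t => ae_of_all μ (hMnonneg t)
  have hu'zero : ∀ᵐ ω ∂μ, Tendsto (fun t => u' (c t ω)) atTop (nhds 0) := by
    filter_upwards [hconv] with ω hω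
    exact tendsto_zero_of_tendsto_pow_mul hβR (by simpa only [hM] using hω)
  refine ⟨Mlim, hconv, hu'zero, ?_⟩
  filter_upwards [hu'zero] with ω hω
  exact hu'anti.antitone.tendsto_atTop_of_tendsto_comp hu'pos hω

/-- Chamberlain–Wilson divergence: if `M_t = (βR)^t u'(c_t)` is a nonnegative supermartingale
with `M_0 < ∞`, `βR > 1`, `u' > 0` strictly decreasing with `u'(x) → 0` as `x → ∞`, then
`M_t` converges a.s. to a finite limit, hence `u'(c_t) → 0` a.s. and `c_t → ∞` a.s. -/
theorem stmt_19 {Ω : Type*} {m0 : MeasurableSpace Ω} (μ : Measure Ω) [IsProbabilityMeasure μ]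
    (ℱ : Filtration ℕ m0) (M : ℕ → Ω → ℝ) (c : ℕ → Ω → ℝ)
    (u' : ℝ → ℝ) (β R : ℝ) (hβR : 1 < β * R)
    (hu'pos : ∀ x : ℝ, 0 < u' x) (hu'anti : StrictAnti u')
    (hu'lim : Tendsto u' atTop (nhds 0))
    (hsuper : Supermartingale M ℱ μ)
    (hMnonneg : ∀ t ω, 0 ≤ M t ω)
    (hM : ∀ t ω, M t ω = (β * R) ^ t * u' (c t ω)) :
    ∃ Mlim : Ω → ℝ,
      (∀ᵐ ω ∂μ, Tendsto (fun t => M t ω) atTop (nhds (Mlim ω))) ∧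
      (∀ᵐ ω ∂μ, Tendsto (fun t => u' (c t ω)) atTop (nhds 0)) ∧
      (∀ᵐ ω ∂μ, Tendsto (fun t => c t ω) atTop atTop) :=
  stmt_19_general μ ℱ M c u' β R hβR hu'pos hu'anti hsuper hMnonneg hM
end
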